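/- Let G be a simple edge-Δ-critical graph, xy ∈ E(G), φ ∈ C^Δ(G - xy), and q a positive number with Δ/2 < q ≤ Δ - d(x)/2 - 2. Let Z(φ) = {z ∈ N(x)\{y} : φ(xz) ∈ φ̄(y)} and S(φ) = {z ∈ N(x) \ (Z(φ) ∪ {y}) : the neighbor y' of y with φ(yy') = φ(xz) has d(y') < q}. Then |Z(φ) ∪ S(φ)| ≥ Δ - σ_q(x,y) - 1. -/

import Mathlib

/-!
Colors missing at `y` appear at `x` on edges `xz`, and these `z` form `Z(φ)`. Colors of the edges
from `y` to its neighbors of degree `< q` appear at `x` as well and give `S(φ)`, except those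
missing at `x`, and there is at most one of them: if the colors of `yw₁` and `yw₂` were missing at
`x`, then `x, w₁, w₂` would be leaves of a Vizing fan at `y`. Kempe-chain interchanges show that
their sets of missing colors are pairwise disjoint, since otherwise `xy` could be colored; hence
`2Δ ≤ d(x) - 1 + d(w₁) + d(w₂) < d(x) - 1 + 2q`, against `q ≤ Δ - d(x)/2 - 2`. Since
`|φ̄(y)| + d(y) - 1 = Δ`, counting gives `|Z(φ) ∪ S(φ)| ≥ Δ - σ_q(x, y) - 1`.
-/

open Finset
open scoped Classical

variable {V : Type*}

/-- `φ` is a proper edge coloring of `G` using colors `{1,…,k}`. -/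
def IsProperEdgeColoring (G : SimpleGraph V) (k : ℕ) (φ : Sym2 V → ℕ) : Prop :=
  (∀ e ∈ G.edgeSet, φ e ∈ Finset.Icc 1 k) ∧
  ∀ e ∈ G.edgeSet, ∀ f ∈ G.edgeSet, e ≠ f → (∃ v, v ∈ e ∧ v ∈ f) → φ e ≠ φ f

/-- The set of colors of `{1,…,k}` missing at `v` under `φ`. -/
noncomputable def missing (G : SimpleGraph V) (k : ℕ) (φ : Sym2 V → ℕ) (v : V) : Finset ℕ :=
  (Finset.Icc 1 k).filter (fun c => ∀ u, G.Adj v u → φ s(v, u) ≠ c)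

/-- `G` is edge-`Δ`-critical: max degree `Δ`, `χ' = Δ+1`, and every proper
subgraph is edge-`Δ`-colorable. -/
def EdgeCritical (G : SimpleGraph V) [Fintype V] (Δ : ℕ) : Prop :=
  G.maxDegree = Δ ∧
  ¬ (∃ φ, IsProperEdgeColoring G Δ φ) ∧
  (∃ φ, IsProperEdgeColoring G (Δ + 1) φ) ∧
  ∀ H : SimpleGraph V, H < G → ∃ φ, IsProperEdgeColoring H Δ φ

namespace SimpleGraph

lemma Connected.card_le_two_of_degree_le_one [Fintype V] {H : SimpleGraph V}
    [DecidableRel H.Adj] (hH : H.Connected) (hdeg : ∀ v, H.degree v ≤ 2) {s : Finset V}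
    (hs : ∀ v ∈ s, H.degree v ≤ 1) : #s ≤ 2 := by
  have hE := hH.card_vert_le_card_edgeSet_add_one
  rw [Nat.card_eq_fintype_card, Nat.card_eq_fintype_card, ← edgeFinset_card] at hE
  have hsum : ∑ v, (H.degree v + if v ∈ s then 1 else 0) ≤ ∑ _v : V, 2 :=
    sum_le_sum fun v _ => by
      have := hdeg v
      split_ifs with h
      · have := hs v h; omega
      · omega
  rw [sum_add_distrib, sum_boole, sum_degrees_eq_twice_card_edges, sum_const, card_univ,
    smul_eq_mul, filter_mem_eq_inter, univ_inter, Nat.cast_id] at hsum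
  omega

lemma not_reachable_of_degree_le_one [Fintype V] {G : SimpleGraph V} [DecidableRel G.Adj]
    (hdeg : ∀ v, G.degree v ≤ 2) {a b c : V} (hab : a ≠ b) (hac : a ≠ c) (hbc : b ≠ c)
    (ha : G.degree a ≤ 1) (hb : G.degree b ≤ 1) (hc : G.degree c ≤ 1)
    (hrab : G.Reachable a b) : ¬ G.Reachable a c := by
  intro hrac
  set C := G.connectedComponentMk a
  have hdegC (v : C.supp) : (G.induce C.supp).degree v = G.degree v :=
    degree_induce_of_neighborSet_subset fun w hw => C.mem_supp_of_adj_mem_supp v.2 hw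
  let a' : C.supp := ⟨a, rfl⟩
  let b' : C.supp := ⟨b, (ConnectedComponent.eq.2 hrab).symm⟩
  let c' : C.supp := ⟨c, (ConnectedComponent.eq.2 hrac).symm⟩
  have h3 : #{a', b', c'} = 3 := by
    rw [card_insert_of_notMem, card_pair] <;> simp [a', b', c', Subtype.ext_iff, *]
  have h2 := C.maximal_connected_induce_supp.1.card_le_two_of_degree_le_one
    (fun v => hdegC v ▸ hdeg v) (s := {a', b', c'}) <| by
      simp only [mem_insert, mem_singleton, forall_eq_or_imp, forall_eq, hdegC]
      exact ⟨ha, hb, hc⟩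
  omega

lemma deleteEdges_adj_left {G : SimpleGraph V} {x y z : V} :
    (G.deleteEdges {s(x, y)}).Adj x z ↔ G.Adj x z ∧ z ≠ y := by
  simp only [deleteEdges_adj, Set.mem_singleton_iff, Sym2.eq_iff]
  grind [Adj.ne]

lemma deleteEdges_adj_right {G : SimpleGraph V} {x y z : V} :
    (G.deleteEdges {s(x, y)}).Adj y z ↔ G.Adj y z ∧ z ≠ x := by
  rw [Sym2.eq_swap, deleteEdges_adj_left]

lemma degree_deleteEdges_add_one [Fintype V] {G : SimpleGraph V} {x y : V} (h : G.Adj x y) :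
    (G.deleteEdges {s(x, y)}).degree x + 1 = G.degree x := by
  have : (G.deleteEdges {s(x, y)}).neighborFinset x = (G.neighborFinset x).erase y := by
    ext z
    simp only [mem_neighborFinset, mem_erase, deleteEdges_adj_left, and_comm]
  rw [← card_neighborFinset_eq_degree, ← card_neighborFinset_eq_degree, this,
    card_erase_add_one (by simpa)]

end SimpleGraph

section coloring

variable {Γ H : SimpleGraph V} {k : ℕ} {ψ : Sym2 V → ℕ} {u v : V} {c : ℕ}

lemma mem_missing : c ∈ missing Γ k ψ v ↔ c ∈ Icc 1 k ∧ ∀ u, Γ.Adj v u → ψ s(v, u) ≠ c :=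
  mem_filter

lemma color_notMem_missing (h : Γ.Adj v u) : ψ s(v, u) ∉ missing Γ k ψ v :=
  fun hm => (mem_missing.1 hm).2 u h rfl

lemma ne_of_mem_missing {e : Sym2 V} (hc : c ∈ missing Γ k ψ v) (he : e ∈ Γ.edgeSet)
    (hv : v ∈ e) : ψ e ≠ c := by
  obtain ⟨u, rfl⟩ := Sym2.mem_iff_exists.1 hv
  exact (mem_missing.1 hc).2 u he

lemma exists_adj_of_notMem_missing (hc : c ∈ Icc 1 k) (h : c ∉ missing Γ k ψ v) :
    ∃ u, Γ.Adj v u ∧ ψ s(v, u) = c := by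
  simpa [mem_missing, hc] using h

namespace IsProperEdgeColoring

lemma color_mem (hψ : IsProperEdgeColoring Γ k ψ) (h : Γ.Adj u v) : ψ s(u, v) ∈ Icc 1 k :=
  hψ.1 _ h

lemma injOn_neighborSet (hψ : IsProperEdgeColoring Γ k ψ) (v : V) :
    Set.InjOn (fun u => ψ s(v, u)) (Γ.neighborSet v) := by
  intro u₁ h₁ u₂ h₂ heq
  by_contra hne
  exact hψ.2 _ h₁ _ h₂ (fun h => hne (Sym2.congr_right.1 h)) ⟨v, by simp, by simp⟩ heq

lemma card_filter_neighborFinset [Fintype V] [DecidableRel Γ.Adj]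
    (hψ : IsProperEdgeColoring Γ k ψ) (v : V) {C : Finset ℕ} (hC : C ⊆ Icc 1 k) :
    #((Γ.neighborFinset v).filter (fun u => ψ s(v, u) ∈ C)) = #(C \ missing Γ k ψ v) := by
  have himage : ((Γ.neighborFinset v).filter (fun u => ψ s(v, u) ∈ C)).image
      (fun u => ψ s(v, u)) = C \ missing Γ k ψ v := by
    ext c
    simp only [mem_image, mem_filter, SimpleGraph.mem_neighborFinset, mem_sdiff]
    constructor
    · rintro ⟨u, ⟨hu, hc⟩, rfl⟩
      exact ⟨hc, color_notMem_missing hu⟩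
    · rintro ⟨hc, hm⟩
      obtain ⟨u, hu, rfl⟩ := exists_adj_of_notMem_missing (hC hc) hm
      exact ⟨u, ⟨hu, hc⟩, rfl⟩
  rw [← himage, card_image_of_injOn ((hψ.injOn_neighborSet v).mono fun u hu => by simp_all)]

lemma card_missing_add_degree [Fintype V] [DecidableRel Γ.Adj]
    (hψ : IsProperEdgeColoring Γ k ψ) (v : V) : #(missing Γ k ψ v) + Γ.degree v = k := by
  have hdeg := hψ.card_filter_neighborFinset v subset_rfl
  rw [filter_true_of_mem fun u hu => hψ.color_mem ((Γ.mem_neighborFinset v u).1 hu),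
    SimpleGraph.card_neighborFinset_eq_degree] at hdeg
  rw [hdeg, add_comm, card_sdiff_add_card_eq_card fun c hc => (mem_missing.1 hc).1,
    Nat.card_Icc, Nat.add_sub_cancel]

lemma missing_nonempty [Fintype V] [DecidableRel Γ.Adj] (hψ : IsProperEdgeColoring Γ k ψ)
    (hv : Γ.degree v < k) : (missing Γ k ψ v).Nonempty := by
  have := hψ.card_missing_add_degree v
  rw [← card_pos]
  omega

lemma update (hψ : IsProperEdgeColoring Γ k ψ)
    (hH : ∀ e ∈ H.edgeSet, e ≠ s(u, v) → e ∈ Γ.edgeSet)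
    (hu : c ∈ missing Γ k ψ u) (hv : c ∈ missing Γ k ψ v) :
    IsProperEdgeColoring H k (Function.update ψ s(u, v) c) := by
  have hfree : ∀ e ∈ H.edgeSet, e ≠ s(u, v) → ∀ w ∈ s(u, v), w ∈ e → ψ e ≠ c := by
    intro e he hne w hw hwe
    rcases Sym2.mem_iff.1 hw with rfl | rfl
    exacts [ne_of_mem_missing hu (hH e he hne) hwe, ne_of_mem_missing hv (hH e he hne) hwe]
  refine ⟨fun e he => ?_, fun e he f hf hef ⟨w, hwe, hwf⟩ => ?_⟩
  · rcases eq_or_ne e s(u, v) with rfl | hne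
    · simpa using (mem_missing.1 hu).1
    · simpa [hne] using hψ.1 e (hH e he hne)
  · rcases eq_or_ne e s(u, v) with rfl | he'
    · have hf' : f ≠ s(u, v) := Ne.symm hef
      simpa [hf'] using (hfree f hf hf' w hwe hwf).symm
    rcases eq_or_ne f s(u, v) with rfl | hf'
    · simpa [he'] using hfree e he he' w hwf hwe
    · simpa [he', hf'] using hψ.2 e (hH e he he') f (hH f hf hf') hef ⟨w, hwe, hwf⟩

end IsProperEdgeColoring

end coloring

section kempe

variable {Γ : SimpleGraph V} {k : ℕ} {ψ : Sym2 V → ℕ} {a b c : ℕ} {v₀ u v : V}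

def kempeGraph (Γ : SimpleGraph V) (ψ : Sym2 V → ℕ) (a b : ℕ) : SimpleGraph V :=
  SimpleGraph.fromEdgeSet (Γ.edgeSet ∩ ψ ⁻¹' {a, b})

@[simp] lemma kempeGraph_adj :
    (kempeGraph Γ ψ a b).Adj u v ↔ Γ.Adj u v ∧ (ψ s(u, v) = a ∨ ψ s(u, v) = b) := by
  simp only [kempeGraph, SimpleGraph.fromEdgeSet_adj, Set.mem_inter_iff, SimpleGraph.mem_edgeSet,
    Set.mem_preimage, Set.mem_insert_iff, Set.mem_singleton_iff]
  exact and_iff_left_of_imp fun h => h.1.ne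

/-- The `(a, b)`-interchange along the Kempe chain through `v₀`. It is applied to every edge
with an end in the chain: those of other colors are fixed by `Equiv.swap a b`. -/
noncomputable def kempeSwap (Γ : SimpleGraph V) (ψ : Sym2 V → ℕ) (a b : ℕ) (v₀ : V) :
    Sym2 V → ℕ :=
  fun e => if ∃ u ∈ e, (kempeGraph Γ ψ a b).Reachable v₀ u then Equiv.swap a b (ψ e) else ψ e

lemma kempeSwap_of_reachable (h : (kempeGraph Γ ψ a b).Reachable v₀ v) (u : V) :
    kempeSwap Γ ψ a b v₀ s(v, u) = Equiv.swap a b (ψ s(v, u)) :=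
  if_pos ⟨v, Sym2.mem_mk_left v u, h⟩

lemma kempeSwap_of_not_reachable (huv : Γ.Adj v u)
    (h : ¬ (kempeGraph Γ ψ a b).Reachable v₀ v) :
    kempeSwap Γ ψ a b v₀ s(v, u) = ψ s(v, u) := by
  unfold kempeSwap
  split_ifs with hr
  · obtain ⟨w, hw, hr⟩ := hr
    rcases Sym2.mem_iff.1 hw with rfl | rfl
    · exact absurd hr h
    -- `u` is in the chain but `v` is not, so `uv` is not an edge of the chain
    have hab : ψ s(v, w) ≠ a ∧ ψ s(v, w) ≠ b := by
      refine ⟨fun ha => h ?_, fun hb => h ?_⟩ <;>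
        exact hr.trans (SimpleGraph.Adj.reachable (by simp [Sym2.eq_swap, huv.symm, *]))
    exact Equiv.swap_apply_of_ne_of_ne hab.1 hab.2
  · rfl

lemma IsProperEdgeColoring.kempeSwap (hψ : IsProperEdgeColoring Γ k ψ) (ha : a ∈ Icc 1 k)
    (hb : b ∈ Icc 1 k) : IsProperEdgeColoring Γ k (kempeSwap Γ ψ a b v₀) := by
  refine ⟨fun e he => ?_, fun e he f hf hef ⟨w, hwe, hwf⟩ => ?_⟩
  · unfold _root_.kempeSwap
    split_ifs
    · rcases eq_or_ne (ψ e) a with h | h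
      · simpa [h] using hb
      rcases eq_or_ne (ψ e) b with h' | h'
      · simpa [h'] using ha
      · simpa [Equiv.swap_apply_of_ne_of_ne h h'] using hψ.1 e he
    · exact hψ.1 e he
  obtain ⟨u₁, rfl⟩ := Sym2.mem_iff_exists.1 hwe
  obtain ⟨u₂, rfl⟩ := Sym2.mem_iff_exists.1 hwf
  have hne := hψ.2 _ he _ hf hef ⟨w, hwe, hwf⟩
  by_cases hr : (kempeGraph Γ ψ a b).Reachable v₀ w
  · simpa [kempeSwap_of_reachable hr] using hne
  · rwa [kempeSwap_of_not_reachable he hr, kempeSwap_of_not_reachable hf hr]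

lemma mem_missing_kempeSwap_of_reachable (ha : a ∈ Icc 1 k) (hb : b ∈ Icc 1 k)
    (h : (kempeGraph Γ ψ a b).Reachable v₀ v) :
    c ∈ missing Γ k (kempeSwap Γ ψ a b v₀) v ↔ Equiv.swap a b c ∈ missing Γ k ψ v := by
  have hIcc : Equiv.swap a b c ∈ Icc 1 k ↔ c ∈ Icc 1 k := by
    rcases eq_or_ne c a with rfl | h
    · simp [ha, hb]
    rcases eq_or_ne c b with rfl | h'
    · simp [ha, hb]
    · rw [Equiv.swap_apply_of_ne_of_ne h h']
  simp only [mem_missing, kempeSwap_of_reachable h, hIcc, ne_eq, Equiv.swap_apply_eq_iff]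

lemma missing_kempeSwap_of_not_reachable (h : ¬ (kempeGraph Γ ψ a b).Reachable v₀ v) :
    missing Γ k (kempeSwap Γ ψ a b v₀) v = missing Γ k ψ v :=
  filter_congr fun c _ => forall_congr' fun u =>
    imp_congr_right fun hu => by rw [kempeSwap_of_not_reachable hu h]

lemma mem_missing_kempeSwap_of_ne (ha : a ∈ Icc 1 k) (hb : b ∈ Icc 1 k) (hca : c ≠ a)
    (hcb : c ≠ b) : c ∈ missing Γ k (kempeSwap Γ ψ a b v₀) v ↔ c ∈ missing Γ k ψ v := by
  by_cases h : (kempeGraph Γ ψ a b).Reachable v₀ v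
  · rw [mem_missing_kempeSwap_of_reachable ha hb h, Equiv.swap_apply_of_ne_of_ne hca hcb]
  · rw [missing_kempeSwap_of_not_reachable h]

lemma degree_kempeGraph_le [Fintype V] (hψ : IsProperEdgeColoring Γ k ψ) (v : V) :
    (kempeGraph Γ ψ a b).degree v ≤ #({a, b} \ missing Γ k ψ v) := by
  refine card_le_card_of_injOn (fun u => ψ s(v, u)) (fun u hu => ?_) fun u₁ h₁ u₂ h₂ =>
    hψ.injOn_neighborSet v (by simp_all) (by simp_all)
  simp only [SimpleGraph.coe_neighborFinset, SimpleGraph.mem_neighborSet, kempeGraph_adj] at hu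
  simp only [coe_sdiff, Set.mem_sdiff, coe_insert, coe_singleton, Set.mem_insert_iff,
    Set.mem_singleton_iff, mem_coe]
  exact ⟨hu.2, color_notMem_missing hu.1⟩

lemma degree_kempeGraph_le_two [Fintype V] (hψ : IsProperEdgeColoring Γ k ψ) (v : V) :
    (kempeGraph Γ ψ a b).degree v ≤ 2 :=
  (degree_kempeGraph_le hψ v).trans ((card_le_card sdiff_subset).trans card_le_two)

lemma degree_kempeGraph_le_one [Fintype V] (hψ : IsProperEdgeColoring Γ k ψ)
    (h : a ∈ missing Γ k ψ v ∨ b ∈ missing Γ k ψ v) : (kempeGraph Γ ψ a b).degree v ≤ 1 := by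
  refine (degree_kempeGraph_le hψ v).trans (card_le_one.2 fun c₁ h₁ c₂ h₂ => ?_)
  simp only [mem_sdiff, mem_insert, mem_singleton] at h₁ h₂
  rcases h with h | h <;> grind

end kempe

/-- The situation of `Γ = G - xy` for an edge `xy` of an edge-`k`-critical graph `G`: the edge
`xy` can never be colored. -/
def MissingDisjoint (Γ : SimpleGraph V) (k : ℕ) (x y : V) : Prop :=
  ∀ ψ, IsProperEdgeColoring Γ k ψ → Disjoint (missing Γ k ψ x) (missing Γ k ψ y)

lemma EdgeCritical.missingDisjoint [Fintype V] {G : SimpleGraph V} {Δ : ℕ}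
    (hc : EdgeCritical G Δ) (x y : V) : MissingDisjoint (G.deleteEdges {s(x, y)}) Δ x y :=
  fun _ hψ => disjoint_left.2 fun _ hx hy =>
    hc.2.1 ⟨_, hψ.update (fun e he hne => by simp [he, hne]) hx hy⟩

/-! A neighbor `z` of `y` with `ψ s(y, z)` missing at `x` is a leaf of the Vizing fan at the
center `y` whose first leaf is `x`. -/

namespace MissingDisjoint

variable {Γ : SimpleGraph V} {k : ℕ} {x y z z₁ z₂ : V} {ψ : Sym2 V → ℕ} {β c : ℕ}

lemma disjoint_missing_center_leaf (hΓ : MissingDisjoint Γ k x y)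
    (hψ : IsProperEdgeColoring Γ k ψ) (hz : Γ.Adj y z) (hα : ψ s(y, z) ∈ missing Γ k ψ x) :
    Disjoint (missing Γ k ψ y) (missing Γ k ψ z) := by
  refine disjoint_left.2 fun β hβy hβz => ?_
  set ψ' := Function.update ψ s(y, z) β
  have hψ' : IsProperEdgeColoring Γ k ψ' := hψ.update (fun e he _ => he) hβy hβz
  -- recoloring `yz` with `β` frees its old color at `y`, and that color stays missing at `x`
  have hαx : ψ s(y, z) ∈ missing Γ k ψ' x := by
    refine mem_missing.2 ⟨(mem_missing.1 hα).1, fun u hu => ?_⟩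
    have hne : s(x, u) ≠ s(y, z) := fun h => color_notMem_missing hu (h ▸ hα)
    simpa [ψ', hne] using (mem_missing.1 hα).2 u hu
  have hαy : ψ s(y, z) ∈ missing Γ k ψ' y := by
    refine mem_missing.2 ⟨(mem_missing.1 hα).1, fun u hu => ?_⟩
    rcases eq_or_ne u z with rfl | hne
    · simpa [ψ'] using ((mem_missing.1 hβy).2 u hz).symm
    · simp only [ψ', Function.update_of_ne (fun h => hne (Sym2.congr_right.1 h))]
      exact fun h => hne (hψ.injOn_neighborSet y hu hz h)
  exact disjoint_left.1 (hΓ ψ' hψ') hαx hαy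

lemma reachable_first_center (hΓ : MissingDisjoint Γ k x y) (hψ : IsProperEdgeColoring Γ k ψ)
    (hβ : β ∈ missing Γ k ψ y) (hc : c ∈ missing Γ k ψ x) :
    (kempeGraph Γ ψ β c).Reachable x y := by
  by_contra hr
  have hβI := (mem_missing.1 hβ).1
  have hcI := (mem_missing.1 hc).1
  have hβx : β ∈ missing Γ k (kempeSwap Γ ψ β c x) x := by
    rwa [mem_missing_kempeSwap_of_reachable hβI hcI .rfl, Equiv.swap_apply_left]
  have hβy : β ∈ missing Γ k (kempeSwap Γ ψ β c x) y := by
    rwa [missing_kempeSwap_of_not_reachable hr]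
  exact disjoint_left.1 (hΓ _ (hψ.kempeSwap hβI hcI)) hβx hβy

lemma reachable_leaf_center (hΓ : MissingDisjoint Γ k x y) (hψ : IsProperEdgeColoring Γ k ψ)
    (hz : Γ.Adj y z) (hα : ψ s(y, z) ∈ missing Γ k ψ x) (hβ : β ∈ missing Γ k ψ y)
    (hc : c ∈ missing Γ k ψ z) : (kempeGraph Γ ψ β c).Reachable z y := by
  by_contra hr
  have hβI := (mem_missing.1 hβ).1
  have hcI := (mem_missing.1 hc).1
  have hαβ : ψ s(y, z) ≠ β := (mem_missing.1 hβ).2 z hz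
  have hαc : ψ s(y, z) ≠ c := by simpa [Sym2.eq_swap] using (mem_missing.1 hc).2 y hz.symm
  have hα' : kempeSwap Γ ψ β c z s(y, z) ∈ missing Γ k (kempeSwap Γ ψ β c z) x := by
    rw [kempeSwap_of_not_reachable hz hr]
    exact (mem_missing_kempeSwap_of_ne hβI hcI hαβ hαc).2 hα
  have hβy : β ∈ missing Γ k (kempeSwap Γ ψ β c z) y := by
    rwa [missing_kempeSwap_of_not_reachable hr]
  have hβz : β ∈ missing Γ k (kempeSwap Γ ψ β c z) z := by
    rwa [mem_missing_kempeSwap_of_reachable hβI hcI .rfl, Equiv.swap_apply_left]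
  exact disjoint_left.1
    (disjoint_missing_center_leaf hΓ (hψ.kempeSwap hβI hcI) hz hα') hβy hβz

lemma disjoint_missing_first_leaf [Fintype V] [DecidableRel Γ.Adj]
    (hΓ : MissingDisjoint Γ k x y) (hψ : IsProperEdgeColoring Γ k ψ) (hy : Γ.degree y < k)
    (hz : Γ.Adj y z) (hα : ψ s(y, z) ∈ missing Γ k ψ x) :
    Disjoint (missing Γ k ψ x) (missing Γ k ψ z) := by
  refine disjoint_left.2 fun c hcx hcz => ?_
  obtain ⟨β, hβ⟩ := hψ.missing_nonempty hy
  have hxy : y ≠ x := by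
    rintro rfl
    exact disjoint_left.1 (hΓ ψ hψ) hcx hcx
  have hxz : x ≠ z := by
    rintro rfl
    exact color_notMem_missing hz.symm (by rwa [Sym2.eq_swap])
  exact SimpleGraph.not_reachable_of_degree_le_one (degree_kempeGraph_le_two hψ) hxy hz.ne hxz
    (degree_kempeGraph_le_one hψ (.inl hβ)) (degree_kempeGraph_le_one hψ (.inr hcx))
    (degree_kempeGraph_le_one hψ (.inr hcz)) (reachable_first_center hΓ hψ hβ hcx).symm
    (reachable_leaf_center hΓ hψ hz hα hβ hcz).symm

lemma disjoint_missing_leaf_leaf [Fintype V] [DecidableRel Γ.Adj]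
    (hΓ : MissingDisjoint Γ k x y) (hψ : IsProperEdgeColoring Γ k ψ) (hy : Γ.degree y < k)
    (hz₁ : Γ.Adj y z₁) (hz₂ : Γ.Adj y z₂) (hα₁ : ψ s(y, z₁) ∈ missing Γ k ψ x)
    (hα₂ : ψ s(y, z₂) ∈ missing Γ k ψ x) (hne : z₁ ≠ z₂) :
    Disjoint (missing Γ k ψ z₁) (missing Γ k ψ z₂) := by
  refine disjoint_left.2 fun c hc₁ hc₂ => ?_
  obtain ⟨β, hβ⟩ := hψ.missing_nonempty hy
  exact SimpleGraph.not_reachable_of_degree_le_one (degree_kempeGraph_le_two hψ) hz₁.ne hz₂.ne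
    hne (degree_kempeGraph_le_one hψ (.inl hβ)) (degree_kempeGraph_le_one hψ (.inr hc₁))
    (degree_kempeGraph_le_one hψ (.inr hc₂)) (reachable_leaf_center hΓ hψ hz₁ hα₁ hβ hc₁).symm
    (reachable_leaf_center hΓ hψ hz₂ hα₂ hβ hc₂).symm

/-- The sets of colors missing at the leaves `x`, `z₁`, `z₂` are disjoint subsets of `[1, k]`. -/
lemma two_mul_le_degree_add_degree_add_degree [Fintype V] [DecidableRel Γ.Adj]
    (hΓ : MissingDisjoint Γ k x y) (hψ : IsProperEdgeColoring Γ k ψ) (hy : Γ.degree y < k)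
    (hz₁ : Γ.Adj y z₁) (hz₂ : Γ.Adj y z₂) (hα₁ : ψ s(y, z₁) ∈ missing Γ k ψ x)
    (hα₂ : ψ s(y, z₂) ∈ missing Γ k ψ x) (hne : z₁ ≠ z₂) :
    2 * k ≤ Γ.degree x + Γ.degree z₁ + Γ.degree z₂ := by
  have hsub : missing Γ k ψ x ∪ missing Γ k ψ z₁ ∪ missing Γ k ψ z₂ ⊆ Icc 1 k := by
    simp only [union_subset_iff]
    exact ⟨⟨fun c hc => (mem_missing.1 hc).1, fun c hc => (mem_missing.1 hc).1⟩,
      fun c hc => (mem_missing.1 hc).1⟩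
  have hcard := card_le_card hsub
  rw [card_union_of_disjoint (disjoint_union_left.2
      ⟨hΓ.disjoint_missing_first_leaf hψ hy hz₂ hα₂,
        hΓ.disjoint_missing_leaf_leaf hψ hy hz₁ hz₂ hα₁ hα₂ hne⟩),
    card_union_of_disjoint (hΓ.disjoint_missing_first_leaf hψ hy hz₁ hα₁), Nat.card_Icc]
    at hcard
  have := hψ.card_missing_add_degree x
  have := hψ.card_missing_add_degree z₁
  have := hψ.card_missing_add_degree z₂
  omega

lemma card_image_inter_missing_le_one [Fintype V] [DecidableRel Γ.Adj]
    (hΓ : MissingDisjoint Γ k x y) (hψ : IsProperEdgeColoring Γ k ψ) (hy : Γ.degree y < k)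
    {W : Finset V} (hW : W ⊆ Γ.neighborFinset y)
    (hWdeg : ∀ w₁ ∈ W, ∀ w₂ ∈ W, w₁ ≠ w₂ → Γ.degree x + Γ.degree w₁ + Γ.degree w₂ < 2 * k) :
    #((W.image fun w => ψ s(y, w)) ∩ missing Γ k ψ x) ≤ 1 := by
  have hWadj : ∀ w ∈ W, Γ.Adj y w := fun w hw => (Γ.mem_neighborFinset y w).1 (hW hw)
  refine card_le_one.2 fun c₁ h₁ c₂ h₂ => ?_
  by_contra hne
  obtain ⟨⟨w₁, hw₁, rfl⟩, hc₁⟩ := And.imp_left mem_image.1 (mem_inter.1 h₁)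
  obtain ⟨⟨w₂, hw₂, rfl⟩, hc₂⟩ := And.imp_left mem_image.1 (mem_inter.1 h₂)
  have hw : w₁ ≠ w₂ := fun h => hne (h ▸ rfl)
  have := hΓ.two_mul_le_degree_add_degree_add_degree hψ hy (hWadj w₁ hw₁) (hWadj w₂ hw₂)
    hc₁ hc₂ hw
  have := hWdeg w₁ hw₁ w₂ hw₂ hw
  omega

/-- Colors missing at `y`, and colors of edges from `y` into `W`, are all seen at `x` except for
at most one of the latter. -/
lemma le_card_filter_add_card_sdiff [Fintype V] [DecidableRel Γ.Adj]
    (hΓ : MissingDisjoint Γ k x y) (hψ : IsProperEdgeColoring Γ k ψ) (hy : Γ.degree y < k)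
    {W : Finset V} (hW : W ⊆ Γ.neighborFinset y)
    (hWdeg : ∀ w₁ ∈ W, ∀ w₂ ∈ W, w₁ ≠ w₂ → Γ.degree x + Γ.degree w₁ + Γ.degree w₂ < 2 * k) :
    k ≤ #((Γ.neighborFinset x).filter fun z =>
        ψ s(x, z) ∈ missing Γ k ψ y ∪ W.image fun w => ψ s(y, w)) +
      #(Γ.neighborFinset y \ W) + 1 := by
  have hWadj : ∀ w ∈ W, Γ.Adj y w := fun w hw => (Γ.mem_neighborFinset y w).1 (hW hw)
  have hCx := hΓ.card_image_inter_missing_le_one hψ hy hW hWdeg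
  set My := missing Γ k ψ y
  set Mx := missing Γ k ψ x
  set C := W.image fun w => ψ s(y, w)
  have hC : #C = #W :=
    card_image_of_injOn ((hψ.injOn_neighborSet y).mono fun w hw => hWadj w hw)
  have hCy : Disjoint My C := disjoint_right.2 fun c hc => by
    obtain ⟨w, hw, rfl⟩ := mem_image.1 hc
    exact color_notMem_missing (hWadj w hw)
  have hMC : My ∪ C ⊆ Icc 1 k := union_subset (fun c hc => (mem_missing.1 hc).1) fun c hc => by
    obtain ⟨w, hw, rfl⟩ := mem_image.1 hc
    exact hψ.color_mem (hWadj w hw)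
  have hsub : (My ∪ C) ∩ Mx ⊆ C ∩ Mx := by
    rw [union_inter_distrib_right, disjoint_iff_inter_eq_empty.1 (hΓ ψ hψ).symm, empty_union]
  have hsplit : #My + #W = #((My ∪ C) \ Mx) + #((My ∪ C) ∩ Mx) := by
    rw [card_sdiff_add_card_inter, card_union_of_disjoint hCy, hC]
  have hMy : #My + #(Γ.neighborFinset y) = k := by
    rw [Γ.card_neighborFinset_eq_degree]
    exact hψ.card_missing_add_degree y
  have hN : #(Γ.neighborFinset y \ W) + #W = #(Γ.neighborFinset y) := card_sdiff_add_card_eq_card hW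
  have hfilter : #((Γ.neighborFinset x).filter fun z => ψ s(x, z) ∈ My ∪ C) =
      #((My ∪ C) \ Mx) := hψ.card_filter_neighborFinset x hMC
  have := card_le_card hsub
  omega

end MissingDisjoint

lemma EdgeCritical.degree_deleteEdges_lt [Fintype V] {G : SimpleGraph V} {Δ : ℕ} {x y : V}
    (hc : EdgeCritical G Δ) (hxy : G.Adj x y) :
    (G.deleteEdges {s(x, y)}).degree y < Δ := by
  have := SimpleGraph.degree_deleteEdges_add_one hxy.symm
  rw [Sym2.eq_swap] at this
  have := hc.1 ▸ G.degree_le_maxDegree y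
  omega

lemma degree_deleteEdges_add_degree_add_degree_lt [Fintype V] {G : SimpleGraph V} {Δ : ℕ}
    {x y w₁ w₂ : V} (hxy : G.Adj x y) {q : ℝ} (hq : q ≤ (Δ : ℝ) - (G.degree x : ℝ) / 2 - 2)
    (h₁ : (G.degree w₁ : ℝ) < q) (h₂ : (G.degree w₂ : ℝ) < q) :
    (G.deleteEdges {s(x, y)}).degree x + (G.deleteEdges {s(x, y)}).degree w₁ +
      (G.deleteEdges {s(x, y)}).degree w₂ < 2 * Δ := by
  have hle (w : V) : ((G.deleteEdges {s(x, y)}).degree w : ℝ) ≤ G.degree w := by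
    exact_mod_cast (G.deleteEdges _).degree_le_of_le (G.deleteEdges_le _)
  have hx : ((G.deleteEdges {s(x, y)}).degree x : ℝ) + 1 = G.degree x := by
    exact_mod_cast SimpleGraph.degree_deleteEdges_add_one hxy
  have : ((G.deleteEdges {s(x, y)}).degree x + (G.deleteEdges {s(x, y)}).degree w₁ +
      (G.deleteEdges {s(x, y)}).degree w₂ : ℝ) < 2 * Δ := by
    linarith [hle w₁, hle w₂]
  exact_mod_cast this

theorem stmt14_general (G : SimpleGraph V) [Fintype V] (Δ : ℕ) (hc : EdgeCritical G Δ)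
    (x y : V) (hxy : G.Adj x y) (φ : Sym2 V → ℕ)
    (hφ : IsProperEdgeColoring (G.deleteEdges {s(x, y)}) Δ φ)
    (q : ℝ) (hq2 : q ≤ (Δ : ℝ) - (G.degree x : ℝ) / 2 - 2) :
    (Δ : ℝ) -
        ((Finset.univ.filter (fun w => G.Adj y w ∧ w ≠ x ∧ q ≤ (G.degree w : ℝ))).card : ℝ) - 1 ≤
      (((Finset.univ.filter (fun z => G.Adj x z ∧ z ≠ y ∧
            φ s(x, z) ∈ missing (G.deleteEdges {s(x, y)}) Δ φ y)) ∪
        (Finset.univ.filter (fun z => G.Adj x z ∧ z ≠ y ∧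
            φ s(x, z) ∉ missing (G.deleteEdges {s(x, y)}) Δ φ y ∧
            ∃ y', G.Adj y y' ∧ φ s(y, y') = φ s(x, z) ∧ (G.degree y' : ℝ) < q))).card : ℝ) := by
  set G' := G.deleteEdges {s(x, y)}
  set small := (G'.neighborFinset y).filter fun w => (G.degree w : ℝ) < q
  have hΓ : MissingDisjoint G' Δ x y := hc.missingDisjoint x y
  have hcount := hΓ.le_card_filter_add_card_sdiff (W := small) hφ (hc.degree_deleteEdges_lt hxy)
    (filter_subset _ _) fun w₁ h₁ w₂ h₂ _ =>
      degree_deleteEdges_add_degree_add_degree_lt hxy hq2 (mem_filter.1 h₁).2 (mem_filter.1 h₂).2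
  have hbig : G'.neighborFinset y \ small =
      ({w | G.Adj y w ∧ w ≠ x ∧ q ≤ (G.degree w : ℝ)} : Finset V) := by
    ext w
    simp only [mem_sdiff, mem_filter, mem_univ, true_and, small, G',
      SimpleGraph.mem_neighborFinset, SimpleGraph.deleteEdges_adj_right, not_and, not_lt]
    tauto
  rw [hbig] at hcount
  refine le_trans ?_ (Nat.cast_le.2 (card_le_card (s := (G'.neighborFinset x).filter fun z =>
    φ s(x, z) ∈ missing G' Δ φ y ∪ small.image fun w => φ s(y, w)) fun z hz => ?_))
  · rw [sub_sub, sub_le_iff_le_add]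
    exact_mod_cast hcount
  -- `φ s(x, y)` is arbitrary, so `S` may contain more vertices than the ones found here
  simp only [mem_filter, SimpleGraph.mem_neighborFinset, G', SimpleGraph.deleteEdges_adj_left,
    mem_union, mem_image, small, SimpleGraph.deleteEdges_adj_right, mem_univ, true_and] at hz ⊢
  obtain ⟨⟨hxz, hzy⟩, hmy | ⟨w, ⟨⟨hyw, -⟩, hw⟩, hcol⟩⟩ := hz
  · exact .inl ⟨hxz, hzy, hmy⟩
  · by_cases hmy : φ s(x, z) ∈ missing G' Δ φ y
    · exact .inl ⟨hxz, hzy, hmy⟩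
    · exact .inr ⟨hxz, hzy, hmy, w, hyw, hcol, hw⟩

theorem stmt14 (G : SimpleGraph V) [Fintype V] (Δ : ℕ) (hc : EdgeCritical G Δ)
    (x y : V) (hxy : G.Adj x y) (φ : Sym2 V → ℕ)
    (hφ : IsProperEdgeColoring (G.deleteEdges {s(x, y)}) Δ φ)
    (q : ℝ) (hq0 : 0 < q)
    (hq1 : (Δ : ℝ) / 2 < q) (hq2 : q ≤ (Δ : ℝ) - (G.degree x : ℝ) / 2 - 2) :
    (Δ : ℝ) -
        ((Finset.univ.filter (fun w => G.Adj y w ∧ w ≠ x ∧ q ≤ (G.degree w : ℝ))).card : ℝ) - 1 ≤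
      (((Finset.univ.filter (fun z => G.Adj x z ∧ z ≠ y ∧
            φ s(x, z) ∈ missing (G.deleteEdges {s(x, y)}) Δ φ y)) ∪
        (Finset.univ.filter (fun z => G.Adj x z ∧ z ≠ y ∧
            φ s(x, z) ∉ missing (G.deleteEdges {s(x, y)}) Δ φ y ∧
            ∃ y', G.Adj y y' ∧ φ s(y, y') = φ s(x, z) ∧ (G.degree y' : ℝ) < q))).card : ℝ) :=
  stmt14_general G Δ hc x y hxy φ hφ q hq2
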